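/- arXiv:0802.1571 — 3 statements merged into one kernel-verified Lean document; each statement's English description precedes it below -/
import Mathlib

section
/- Let X be a finite n-dimensional simplicial complex satisfying condition (1_X) and let 0 ≤ i ≤ n−1. For every f ∈ C^i(X), i·(Δf, f) + (n−i)·(f, f) = Σ_{v ∈ V} (Δρ_v f, ρ_v f), where the sum is over all vertices v of X. -/
open Finset

open scoped Classical

variable {V : Type*}

/-- A (finite) simplicial complex on the vertex type `V`: a collection of nonempty
finite sets of vertices (the simplices) closed under passing to nonempty subsets. -/
def IsComplex [DecidableEq V] (K : Finset (Finset V)) : Prop :=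
  (∀ s ∈ K, s.Nonempty) ∧ ∀ s ∈ K, ∀ t : Finset V, t ⊆ s → t.Nonempty → t ∈ K

/-- `K` is `n`-dimensional and satisfies condition `(1_X)`: every simplex has dimension
at most `n` and is a face of some `n`-dimensional simplex (one of cardinality `n+1`). -/
def IsPureDim [DecidableEq V] (K : Finset (Finset V)) (n : ℕ) : Prop :=
  (∀ s ∈ K, s.card ≤ n + 1) ∧ ∀ s ∈ K, ∃ t ∈ K, s ⊆ t ∧ t.card = n + 1

/-- `wt K n s` : the number `w(s)` of `n`-dimensional simplices of `K` containing `s`. -/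
noncomputable def wt [DecidableEq V] (K : Finset (Finset V)) (n : ℕ) (s : Finset V) : ℕ :=
  (K.filter fun t => s ⊆ t ∧ t.card = n + 1).card

/-- An `m`-tuple of vertices is allowed when its entries are distinct and form a simplex
of `K`; i.e. it is an oriented `(m-1)`-simplex of `K`. -/
def Allowed [DecidableEq V] [Fintype V] (K : Finset (Finset V)) {m : ℕ}
    (v : Fin m → V) : Prop :=
  Function.Injective v ∧ Finset.image v Finset.univ ∈ K

/-- `f` is an `(m-1)`-cochain on `K`: a real-valued alternating function on oriented
`(m-1)`-simplices of `K` (realized as a function on all `m`-tuples of vertices which is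
alternating and vanishes on tuples which are not oriented simplices of `K`). -/
def IsCochain [DecidableEq V] [Fintype V] (K : Finset (Finset V)) (m : ℕ)
    (f : (Fin m → V) → ℝ) : Prop :=
  (∀ (σ : Equiv.Perm (Fin m)) (v : Fin m → V),
      f (v ∘ σ) = ((Equiv.Perm.sign σ : ℤ) : ℝ) * f v) ∧
  ∀ v : Fin m → V, ¬ Allowed K v → f v = 0

/-- The inner product `(f,g) = ∑_s w(s)·f(s)·g(s)` on `(m-1)`-cochains, the sum being over
the unoriented `(m-1)`-simplices `s` of `K` (each with an arbitrarily chosen orientation);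
summing over all `m`-tuples counts each simplex `m!` times, whence the normalization. -/
noncomputable def innerC [DecidableEq V] [Fintype V] (K : Finset (Finset V)) (n m : ℕ)
    (f g : (Fin m → V) → ℝ) : ℝ :=
  (∑ v : Fin m → V, (wt K n (Finset.image v Finset.univ) : ℝ) * f v * g v) /
    (Nat.factorial m : ℝ)

/-- The coboundary `d : C^{m-1}(K) → C^m(K)`. -/
noncomputable def cobound [DecidableEq V] [Fintype V] (K : Finset (Finset V)) {m : ℕ}
    (f : (Fin m → V) → ℝ) : (Fin (m + 1) → V) → ℝ :=
  fun v => if Allowed K v then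
    ∑ j : Fin (m + 1), (-1 : ℝ) ^ (j : ℕ) * f (v ∘ Fin.succAbove j)
  else 0

/-- The operator `δ : C^m(K) → C^{m-1}(K)`,
`(δf)(s) = ∑_x (w([x,s])/w(s))·f([x,s])`, the sum being over the vertices `x`
such that `[x,s]` is an oriented simplex of `K`. -/
noncomputable def codiff [DecidableEq V] [Fintype V] (K : Finset (Finset V)) (n : ℕ) {m : ℕ}
    (f : (Fin (m + 1) → V) → ℝ) : (Fin m → V) → ℝ :=
  fun s => ∑ x : V,
    if Allowed K (Fin.cons x s) then
      ((wt K n (Finset.image (Fin.cons x s) Finset.univ) : ℝ) /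
          (wt K n (Finset.image s Finset.univ) : ℝ)) * f (Fin.cons x s)
    else 0

/-- The Laplace operator `Δ = δ ∘ d` on `(m-1)`-cochains. -/
noncomputable def lap [DecidableEq V] [Fintype V] (K : Finset (Finset V)) (n : ℕ) {m : ℕ}
    (f : (Fin m → V) → ℝ) : (Fin m → V) → ℝ :=
  codiff K n (cobound K f)

/-- `ρ_v : C^{m-1}(K) → C^{m-1}(K)`: `(ρ_v f)(s) = f(s)` if `v` is a vertex of `s`,
and `0` otherwise. -/
noncomputable def rho [DecidableEq V] {m : ℕ} (v : V) (f : (Fin m → V) → ℝ) :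
    (Fin m → V) → ℝ :=
  fun s => if ∃ j, s j = v then f s else 0

/-- The vertices of `K`. -/
noncomputable def verts [DecidableEq V] [Fintype V] (K : Finset (Finset V)) : Finset V :=
  Finset.univ.filter fun v => {v} ∈ K

/-- The link `Lk(v)` of a vertex `v`: all simplices `s` of `K` with `v ∉ s` and
`s ∪ {v} ∈ K`. -/
noncomputable def linkK [DecidableEq V] (K : Finset (Finset V)) (v : V) :
    Finset (Finset V) :=
  K.filter fun s => v ∉ s ∧ insert v s ∈ K

/-- `τ_v : C^{m}(K) → C^{m-1}(Lk(v))`: `(τ_v f)(s) = f([v,s])` for `s` an oriented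
simplex of the link `Lk(v)`. -/
noncomputable def tau [DecidableEq V] [Fintype V] (K : Finset (Finset V)) (v : V) {m : ℕ}
    (f : (Fin (m + 1) → V) → ℝ) : (Fin m → V) → ℝ :=
  fun s => if Allowed (linkK K v) s then f (Fin.cons v s) else 0

/-- `c` is an eigenvalue of the Laplace operator acting on `(m-1)`-cochains of `K`. -/
def IsEigen [DecidableEq V] [Fintype V] (K : Finset (Finset V)) (n m : ℕ) (c : ℝ) : Prop :=
  ∃ f : (Fin m → V) → ℝ, f ≠ 0 ∧ IsCochain K m f ∧ lap K n f = c • f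

/-! Expanding `(Δg, g) = ∑_s ∑_x w([x, s]) (dg)([x, s]) g(s)` and summing `ρ_v g` over the
vertices `v`, the diagonal term `g(s)²` is counted once for each of the `i + 1` vertices of `s`,
and each cross term `g([x, s ∖ s_k]) g(s)` once for each of the `i` vertices the two faces share.
Hence `∑_v (Δρ_v f, ρ_v f) = i (Δf, f) + ∑_s (∑_x w([x, s])) f(s)²`, and the inner sum is
`(n - i) w(s)` because every `n`-simplex containing `s` has `n - i` vertices outside `s`. -/

section
variable [DecidableEq V] {K : Finset (Finset V)} {n : ℕ}

lemma wt_anti {σ τ : Finset V} (h : σ ⊆ τ) : wt K n τ ≤ wt K n σ :=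
  card_le_card fun T hT => by
    simp only [mem_filter] at hT ⊢
    exact ⟨hT.1, h.trans hT.2.1, hT.2.2⟩

lemma wt_eq_zero_of_notMem (hK : IsComplex K) {σ : Finset V} (hσ : σ.Nonempty) (h : σ ∉ K) :
    wt K n σ = 0 :=
  card_eq_zero.2 <| filter_eq_empty_iff.2 fun T hT hσT => h (hK.2 T hT σ hσT.1 hσ)

lemma image_cons_univ {m : ℕ} (x : V) (s : Fin m → V) :
    image (Fin.cons x s) univ = insert x (image s univ) := by
  ext y
  simp only [mem_image, mem_univ, true_and, Fin.exists_fin_succ, Fin.cons_zero, Fin.cons_succ,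
    mem_insert]
  tauto

lemma rho_apply {m : ℕ} (v : V) (f : (Fin m → V) → ℝ) (t : Fin m → V) :
    rho v f t = if v ∈ image t univ then f t else 0 := by
  simp [rho]

lemma card_image_succAbove_inter {N : ℕ} {t : Fin (N + 1) → V} (ht : Function.Injective t)
    (j k : Fin (N + 1)) :
    #(image (t ∘ j.succAbove) univ ∩ image (t ∘ k.succAbove) univ) = N + 1 - #{j, k} := by
  rw [← image_image, ← image_image, Fin.image_succAbove_univ, Fin.image_succAbove_univ,
    ← image_inter _ _ ht, card_image_of_injective _ ht, ← compl_union, card_compl,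
    Fintype.card_fin, ← insert_eq]

lemma filter_insert_subset_eq [Fintype V] (σ T : Finset V) (p : Prop) [Decidable p] :
    σᶜ.filter (fun x => insert x σ ⊆ T ∧ p) = if σ ⊆ T ∧ p then T \ σ else ∅ := by
  ext x
  split_ifs with h
  · simp only [mem_filter, mem_compl, mem_sdiff, insert_subset_iff]
    tauto
  · simp only [mem_filter, insert_subset_iff, notMem_empty, iff_false]
    tauto

/-- Each top simplex `T ⊇ σ` is counted once for each of its `#T - #σ` vertices outside `σ`. -/
lemma sum_wt_insert_add_card_mul_wt [Fintype V] (σ : Finset V) :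
    ∑ x ∈ σᶜ, wt K n (insert x σ) + #σ * wt K n σ = (n + 1) * wt K n σ := by
  have hcount : ∑ x ∈ σᶜ, wt K n (insert x σ)
      = ∑ T ∈ K.filter (fun T => σ ⊆ T ∧ #T = n + 1), #(T \ σ) := by
    rw [sum_filter]
    refine (sum_card_bipartiteAbove_eq_sum_card_bipartiteBelow
      (r := fun x T => insert x σ ⊆ T ∧ #T = n + 1)).trans (sum_congr rfl fun T _ => ?_)
    rw [bipartiteBelow, filter_insert_subset_eq, apply_ite card, card_empty]
  rw [hcount, wt, mul_comm, mul_comm (n + 1), ← smul_eq_mul, ← smul_eq_mul, ← sum_const,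
    ← sum_const, ← sum_add_distrib]
  refine sum_congr rfl fun T hT => ?_
  obtain ⟨-, hσT, hT⟩ := mem_filter.1 hT
  rw [card_sdiff_add_card_eq_card hσT, hT]

end

section
variable [Fintype V] [DecidableEq V] {K : Finset (Finset V)} {n : ℕ}

lemma allowed_cons_iff {m : ℕ} {x : V} {s : Fin m → V} (hs : Function.Injective s) :
    Allowed K (Fin.cons x s) ↔ x ∉ image s univ ∧ insert x (image s univ) ∈ K := by
  simp [Allowed, Fin.cons_injective_iff, hs, image_cons_univ]

lemma Allowed.tail (hK : IsComplex K) {m : ℕ} {t : Fin (m + 2) → V} (ht : Allowed K t) :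
    Allowed K (t ∘ Fin.succ) :=
  ⟨ht.1.comp (Fin.succ_injective _), hK.2 _ ht.2 _
    (image_subset_iff.2 fun _ _ => mem_image_of_mem t (mem_univ _)) (univ_nonempty.image _)⟩

/-- The weight `w([x, s])` with which `x` enters `(δ f)(s)`, and `0` when `[x, s]` is not an
oriented simplex. -/
noncomputable def cofaceWt (K : Finset (Finset V)) (n : ℕ) {m : ℕ} (x : V) (s : Fin m → V) :
    ℝ :=
  if Allowed K (Fin.cons x s) then wt K n (image (Fin.cons x s) univ) else 0

lemma sum_cofaceWt (hK : IsComplex K) {m : ℕ} {s : Fin m → V} (hs : Function.Injective s) :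
    ∑ x, cofaceWt K n x s = ((n : ℝ) + 1 - m) * wt K n (image s univ) := by
  set σ := image s univ with hσ
  have hterm (x : V) :
      cofaceWt K n x s = if x ∈ σᶜ then (wt K n (insert x σ) : ℝ) else 0 := by
    simp only [cofaceWt, allowed_cons_iff hs, image_cons_univ, mem_compl, ← hσ]
    by_cases hx : x ∈ σ
    · simp only [hx, not_true_eq_false, false_and, if_false]
    by_cases hxσ : insert x σ ∈ K
    · simp only [hx, hxσ, not_false_eq_true, and_self, if_true]
    · simp only [hxσ, and_false, wt_eq_zero_of_notMem hK (insert_nonempty x σ) hxσ,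
        Nat.cast_zero, ite_self]
  have hcard : #σ = m := by rw [card_image_of_injective _ hs, card_univ, Fintype.card_fin]
  have hcount : ((∑ x ∈ σᶜ, wt K n (insert x σ) + #σ * wt K n σ : ℕ) : ℝ)
      = ((n + 1) * wt K n σ : ℕ) := by
    rw [sum_wt_insert_add_card_mul_wt]
  push_cast [hcard] at hcount
  rw [sum_congr rfl fun x _ => hterm x, sum_ite_mem, univ_inter]
  linarith

lemma innerC_lap_eq {m : ℕ} (g : (Fin m → V) → ℝ) :
    innerC K n m (lap K n g) g
      = (∑ s, ∑ x, cofaceWt K n x s * (cobound K g (Fin.cons x s) * g s)) / m.factorial := by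
  unfold innerC lap codiff cofaceWt
  congr 1
  refine sum_congr rfl fun s _ => ?_
  rw [mul_sum, sum_mul]
  refine sum_congr rfl fun x _ => ?_
  split_ifs
  · have hwt : wt K n (image (Fin.cons x s) univ) ≤ wt K n (image s univ) :=
      wt_anti (image_cons_univ x s ▸ subset_insert x _)
    have hcancel : (wt K n (image s univ) : ℝ) * (wt K n (image (Fin.cons x s) univ)
        / wt K n (image s univ)) = wt K n (image (Fin.cons x s) univ) :=
      mul_div_cancel_of_imp' fun h => by
        rw [Nat.cast_eq_zero] at h ⊢
        omega
    linear_combination (cobound K g (Fin.cons x s) * g s) * hcancel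
  · simp

lemma subset_verts (hK : IsComplex K) {σ : Finset V} (hσ : σ ∈ K) :
    σ ⊆ verts K := fun v hv =>
  mem_filter.2 ⟨mem_univ v, hK.2 σ hσ {v} (singleton_subset_iff.2 hv) (singleton_nonempty v)⟩

lemma sum_verts_rho_mul_rho (hK : IsComplex K) {m m' : ℕ} (g : (Fin m → V) → ℝ)
    (f : (Fin m' → V) → ℝ) (t : Fin m → V) {s : Fin m' → V} (hs : image s univ ∈ K) :
    ∑ v ∈ verts K, rho v g t * rho v f s = #(image t univ ∩ image s univ) * (g t * f s) := by
  have hterm (v : V) : rho v g t * rho v f s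
      = if v ∈ image t univ ∩ image s univ then g t * f s else 0 := by
    simp only [rho_apply, mem_inter]
    split_ifs <;> simp_all
  rw [sum_congr rfl fun v _ => hterm v, sum_ite_mem,
    inter_eq_right.2 (inter_subset_right.trans (subset_verts hK hs)), sum_const, nsmul_eq_mul]

lemma sum_verts_cobound_rho_mul_rho (hK : IsComplex K) {m : ℕ} (f : (Fin (m + 1) → V) → ℝ)
    {t : Fin (m + 2) → V} (ht : Allowed K t) :
    ∑ v ∈ verts K, cobound K (rho v f) t * rho v f (t ∘ Fin.succ)
      = m * (cobound K f t * f (t ∘ Fin.succ)) + f (t ∘ Fin.succ) * f (t ∘ Fin.succ) := by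
  have hshared (j : Fin (m + 2)) : #(image (t ∘ j.succAbove) univ ∩ image (t ∘ Fin.succ) univ)
      = m + if j = 0 then 1 else 0 := by
    rw [← Fin.succAbove_zero, card_image_succAbove_inter ht.1]
    split_ifs with hj
    · simp [hj]
    · rw [card_pair hj]
      omega
  simp only [cobound, if_pos ht, sum_mul, mul_assoc]
  rw [sum_comm]
  simp only [← mul_sum, sum_verts_rho_mul_rho hK _ _ _ (ht.tail hK).2, hshared]
  push_cast
  simp only [add_mul, mul_add, sum_add_distrib, mul_left_comm _ (m : ℝ), ← mul_sum]
  congr 1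
  simp

lemma cofaceWt_mul_sum_verts (hK : IsComplex K) {m : ℕ} (f : (Fin (m + 1) → V) → ℝ)
    (x : V) (s : Fin (m + 1) → V) :
    cofaceWt K n x s * ∑ v ∈ verts K, cobound K (rho v f) (Fin.cons x s) * rho v f s
      = cofaceWt K n x s * (m * (cobound K f (Fin.cons x s) * f s) + f s * f s) := by
  unfold cofaceWt
  split_ifs with hA
  · have h := sum_verts_cobound_rho_mul_rho hK f hA
    rw [Fin.cons_comp_succ] at h
    rw [h]
  · rw [zero_mul, zero_mul]

end

theorem garland_local_global_identity_general
    [Fintype V] [DecidableEq V] (K : Finset (Finset V)) (n i : ℕ)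
    (hcplx : IsComplex K)
    (f : (Fin (i + 1) → V) → ℝ) (hf : IsCochain K (i + 1) f) :
    (i : ℝ) * innerC K n (i + 1) (lap K n f) f
      + ((n : ℝ) - (i : ℝ)) * innerC K n (i + 1) f f
      = ∑ v ∈ verts K, innerC K n (i + 1) (lap K n (rho v f)) (rho v f) := by
  have hdiag : ∀ s : Fin (i + 1) → V, (∑ x, cofaceWt K n x s) * (f s * f s)
      = ((n : ℝ) - i) * (wt K n (image s univ) * f s * f s) := by
    intro s
    by_cases hs : Function.Injective s
    · rw [sum_cofaceWt hcplx hs]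
      push_cast
      ring
    · rw [hf.2 s fun h => hs h.1]
      ring
  simp only [innerC_lap_eq, ← sum_div]
  rw [innerC, mul_div_assoc', mul_div_assoc', ← add_div]
  congr 1
  calc (i : ℝ) * ∑ s, ∑ x, cofaceWt K n x s * (cobound K f (Fin.cons x s) * f s)
        + ((n : ℝ) - i) * ∑ s, (wt K n (image s univ) : ℝ) * f s * f s
      = ∑ s, ∑ x, cofaceWt K n x s * (i * (cobound K f (Fin.cons x s) * f s) + f s * f s) := by
        simp only [mul_sum, ← hdiag, sum_mul, ← sum_add_distrib, mul_add]
        refine sum_congr rfl fun s _ => sum_congr rfl fun x _ => by ring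
    _ = ∑ v ∈ verts K, ∑ s, ∑ x,
          cofaceWt K n x s * (cobound K (rho v f) (Fin.cons x s) * rho v f s) := by
        simp only [← cofaceWt_mul_sum_verts hcplx f, mul_sum]
        conv_rhs => rw [sum_comm]
        exact sum_congr rfl fun s _ => sum_comm

/-- for every `f ∈ C^i(X)`, `0 ≤ i ≤ n-1`,
`i·(Δf,f) + (n-i)·(f,f) = ∑_{v ∈ Ver(X)} (Δρ_v f, ρ_v f)`. -/
theorem garland_local_global_identity
    [Fintype V] [DecidableEq V] (K : Finset (Finset V)) (n i : ℕ)
    (hcplx : IsComplex K) (hpure : IsPureDim K n) (hi : i + 1 ≤ n)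
    (f : (Fin (i + 1) → V) → ℝ) (hf : IsCochain K (i + 1) f) :
    (i : ℝ) * innerC K n (i + 1) (lap K n f) f
      + ((n : ℝ) - (i : ℝ)) * innerC K n (i + 1) f f
      = ∑ v ∈ verts K, innerC K n (i + 1) (lap K n (rho v f)) (rho v f) :=
  garland_local_global_identity_general K n i hcplx f hf
end

section
/- Let X be a finite n-dimensional simplicial complex satisfying condition (1_X), let 1 ≤ i ≤ n−1, and let v be a vertex of X. For all f, g ∈ C^i(X), one has (τ_v f, τ_v g)_v = (ρ_v f, ρ_v g), where the left side is the inner product on C^{i−1}(Lk(v)) and the right side is the inner product on C^i(X). -/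
open Finset

open scoped Classical

variable {V : Type*}

/-! Both sides are sums of `w · f · g` over oriented `i`-simplices of `X` through `v`.
On the left, the oriented simplex `s` of `Lk(v)` stands for `[v,s]`, and `w_v(s) = w([v,s])`
because deleting `v` matches the `n`-simplices of `X` through `{v} ∪ s` with the
`(n-1)`-simplices of `Lk(v)` through `s`. On the right, `v` occupies exactly one of the `i+1`
positions of an oriented simplex through it; as `w · f · g` is invariant under reordering, each
position contributes the same sum, and the factor `i+1` is the ratio `(i+1)! / i!` of the
normalizations. -/

section Tuples

variable [DecidableEq V]

lemma image_univ_fin_cons {m : ℕ} (x : V) (s : Fin m → V) :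
    univ.image (Fin.cons x s : Fin (m + 1) → V) = insert x (univ.image s) := by
  apply coe_injective
  push_cast [Set.image_univ]
  exact Fin.range_cons x s

lemma image_univ_comp_perm {m : ℕ} (t : Fin m → V) (σ : Equiv.Perm (Fin m)) :
    univ.image (t ∘ σ) = univ.image t := by
  rw [← image_image, image_univ_equiv]

lemma sum_ite_apply_eq_of_injective {ι M : Type*} [Fintype ι] [AddCommMonoid M] {t : ι → V}
    (ht : Function.Injective t) (v : V) (c : M) :
    ∑ j, (if t j = v then c else 0) = if ∃ j, t j = v then c else 0 := by
  split_ifs with hv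
  · obtain ⟨j₀, hj₀⟩ := hv
    simp_rw [ht.eq_iff' hj₀]
    exact Fintype.sum_ite_eq' j₀ _
  · exact sum_eq_zero fun j _ => if_neg fun hj => hv ⟨j, hj⟩

variable [Fintype V] {M : Type*} [AddCommMonoid M]

lemma sum_ite_apply_zero_eq {m : ℕ} (H : (Fin (m + 1) → V) → M) (v : V) :
    ∑ t, (if t 0 = v then H t else 0) = ∑ s : Fin m → V, H (Fin.cons v s) := by
  rw [← (Fin.consEquiv fun _ => V).sum_comp, Fintype.sum_prod_type]
  simp only [Fin.consEquiv_apply, Fin.cons_zero, sum_ite_irrel, sum_const_zero,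
    Fintype.sum_ite_eq']
  rfl

lemma sum_ite_apply_eq_of_perm_invariant {m : ℕ} {H : (Fin (m + 1) → V) → M}
    (hH : ∀ (σ : Equiv.Perm (Fin (m + 1))) t, H (t ∘ σ) = H t) (j : Fin (m + 1)) (v : V) :
    ∑ t, (if t j = v then H t else 0) = ∑ s : Fin m → V, H (Fin.cons v s) := by
  have hswap : Function.Involutive fun t : Fin (m + 1) → V => t ∘ Equiv.swap 0 j :=
    fun t => by ext; simp
  rw [← sum_ite_apply_zero_eq]
  exact Fintype.sum_bijective _ hswap.bijective _ _ fun t => by simp [hH]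

end Tuples

section Link

variable [DecidableEq V] {K : Finset (Finset V)}

lemma wt_linkK (hK : IsComplex K) {n : ℕ} (hn : 1 ≤ n) {v : V} {t : Finset V}
    (ht : t ∈ linkK K v) : wt (linkK K v) (n - 1) t = wt K n (insert v t) := by
  have hvt : v ∉ t := (mem_filter.1 ht).2.1
  unfold wt
  rw [Nat.sub_add_cancel hn]
  refine card_nbij' (insert v) (fun w => w.erase v) ?_ ?_ ?_ ?_ <;>
    simp only [linkK, coe_filter, mem_filter, Set.MapsTo, Set.LeftInvOn, Set.mem_ofPred_eq]
  · rintro u ⟨⟨-, hvu, hu⟩, htu, hcard⟩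
    exact ⟨hu, insert_subset_insert _ htu, by rw [card_insert_of_notMem hvu, hcard]⟩
  · rintro w ⟨hw, htw, hcard⟩
    have hvw : v ∈ w := htw (mem_insert_self _ _)
    have hcard' : (w.erase v).card = n := by rw [card_erase_of_mem hvw, hcard]; omega
    have hne : (w.erase v).Nonempty := by rw [← card_pos, hcard']; omega
    refine ⟨⟨hK.2 _ hw _ (erase_subset _ _) hne, notMem_erase _ _, ?_⟩, ?_, hcard'⟩
    · rwa [insert_erase hvw]
    · exact subset_erase.2 ⟨(subset_insert _ _).trans htw, hvt⟩
  · rintro u ⟨⟨-, hvu, -⟩, -⟩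
    exact erase_insert hvu
  · rintro w ⟨-, htw, -⟩
    exact insert_erase (htw (mem_insert_self _ _))

end Link

section Cochains

variable [DecidableEq V] [Fintype V] {K : Finset (Finset V)}

lemma IsCochain.mul_comp_perm {m : ℕ} {f g : (Fin m → V) → ℝ} (hf : IsCochain K m f)
    (hg : IsCochain K m g) (σ : Equiv.Perm (Fin m)) (t : Fin m → V) :
    f (t ∘ σ) * g (t ∘ σ) = f t * g t := by
  have hsign : ((Equiv.Perm.sign σ : ℤ) : ℝ) * (Equiv.Perm.sign σ : ℤ) = 1 := by
    rw [← Int.cast_mul, ← Units.val_mul, Int.units_mul_self, Units.val_one, Int.cast_one]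
  rw [hf.1, hg.1]
  linear_combination f t * g t * hsign

lemma sum_wt_mul_rho_mul_rho {n m : ℕ} {f g : (Fin (m + 1) → V) → ℝ}
    (hf : IsCochain K (m + 1) f) (hg : IsCochain K (m + 1) g) (v : V) :
    ∑ t, (wt K n (univ.image t) : ℝ) * rho v f t * rho v g t =
      (m + 1) * ∑ s : Fin m → V,
        (wt K n (univ.image (Fin.cons v s)) : ℝ) * f (Fin.cons v s) * g (Fin.cons v s) := by
  set H : (Fin (m + 1) → V) → ℝ := fun t => (wt K n (univ.image t) : ℝ) * f t * g t
  have hH : ∀ (σ : Equiv.Perm (Fin (m + 1))) t, H (t ∘ σ) = H t := fun σ t => by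
    simp only [H, image_univ_comp_perm, mul_assoc, hf.mul_comp_perm hg]
  have hsplit : ∀ t, (wt K n (univ.image t) : ℝ) * rho v f t * rho v g t =
      ∑ j, (if t j = v then H t else 0) := fun t => by
    by_cases ht : Function.Injective t
    · rw [sum_ite_apply_eq_of_injective ht]
      simp only [rho, H]
      split_ifs <;> ring
    · simp [rho, H, hf.2 t fun h => ht h.1]
  simp_rw [hsplit]
  rw [sum_comm]
  simp [sum_ite_apply_eq_of_perm_invariant hH, H]

lemma allowed_linkK_iff (hK : IsComplex K) {m : ℕ} (hm : 0 < m) (v : V) (s : Fin m → V) :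
    Allowed (linkK K v) s ↔ Allowed K (Fin.cons v s : Fin (m + 1) → V) := by
  have hne : (univ.image s).Nonempty := (univ_nonempty_iff.2 ⟨⟨0, hm⟩⟩).image s
  have hv : v ∉ univ.image s ↔ v ∉ Set.range s := by simp
  simp only [Allowed, linkK, mem_filter, Fin.cons_injective_iff, image_univ_fin_cons, hv]
  constructor
  · rintro ⟨hs, -, hvs, hins⟩
    exact ⟨⟨hvs, hs⟩, hins⟩
  · rintro ⟨⟨hvs, hs⟩, hins⟩
    exact ⟨hs, hK.2 _ hins _ (subset_insert _ _) hne, hvs, hins⟩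

lemma sum_wt_linkK_mul_tau_mul_tau (hK : IsComplex K) {n m : ℕ} (hn : 1 ≤ n) (hm : 0 < m)
    {v : V} {f : (Fin (m + 1) → V) → ℝ} (hf : IsCochain K (m + 1) f)
    (g : (Fin (m + 1) → V) → ℝ) :
    ∑ s, (wt (linkK K v) (n - 1) (univ.image s) : ℝ) * tau K v f s * tau K v g s =
      ∑ s : Fin m → V,
        (wt K n (univ.image (Fin.cons v s)) : ℝ) * f (Fin.cons v s) * g (Fin.cons v s) := by
  refine sum_congr rfl fun s _ => ?_
  by_cases hs : Allowed (linkK K v) s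
  · simp only [tau, if_pos hs, wt_linkK hK hn hs.2, image_univ_fin_cons]
  · have hf0 : f (Fin.cons v s) = 0 := hf.2 _ fun h => hs ((allowed_linkK_iff hK hm v s).2 h)
    simp [tau, hs, hf0]

end Cochains

theorem tau_inner_product_general
    [Fintype V] [DecidableEq V] (K : Finset (Finset V)) (n i : ℕ)
    (hcplx : IsComplex K) (hi1 : 1 ≤ i) (hin : i + 1 ≤ n)
    (v : V)
    (f g : (Fin (i + 1) → V) → ℝ)
    (hf : IsCochain K (i + 1) f) (hg : IsCochain K (i + 1) g) :
    innerC (linkK K v) (n - 1) i (tau K v f) (tau K v g)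
      = innerC K n (i + 1) (rho v f) (rho v g) := by
  unfold innerC
  rw [sum_wt_linkK_mul_tau_mul_tau hcplx (by omega) hi1 hf, sum_wt_mul_rho_mul_rho hf hg,
    Nat.factorial_succ]
  push_cast
  field_simp

/-- for `1 ≤ i ≤ n-1`, a vertex `v` of `X`, and `f, g ∈ C^i(X)`,
`(τ_v f, τ_v g)_v = (ρ_v f, ρ_v g)`, the left inner product being taken in
`C^{i-1}(Lk(v))` (an `(n-1)`-dimensional complex) and the right one in `C^i(X)`. -/
theorem tau_inner_product
    [Fintype V] [DecidableEq V] (K : Finset (Finset V)) (n i : ℕ)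
    (hcplx : IsComplex K) (hpure : IsPureDim K n) (hi1 : 1 ≤ i) (hin : i + 1 ≤ n)
    (v : V) (hv : {v} ∈ K)
    (f g : (Fin (i + 1) → V) → ℝ)
    (hf : IsCochain K (i + 1) f) (hg : IsCochain K (i + 1) g) :
    innerC (linkK K v) (n - 1) i (tau K v f) (tau K v g)
      = innerC K n (i + 1) (rho v f) (rho v g) :=
  tau_inner_product_general K n i hcplx hi1 hin v f g hf hg
end

section
/- Let X be a finite n-dimensional simplicial complex satisfying condition (1_X), let 1 ≤ i ≤ n−1, and let v be a vertex of X. For every f ∈ C^i(X), one has (Δρ_v f, ρ_v f) = (Δ_v τ_v f, τ_v f)_v, where Δ is the Laplace operator on C^i(X) and Δ_v is the Laplace operator on C^{i−1}(Lk(v)). -/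
open Finset

open scoped Classical

variable {V : Type*}

/-!
Only oriented simplices through `v` contribute to `(Δρ_v f, ρ_v f)`. Since `Δρ_v f` and `ρ_v f`
are both alternating, the summand `w(s)·(Δρ_v f)(s)·(ρ_v f)(s)` is a symmetric function of the
tuple `s`, so the sum over tuples having `v` in one of their `i + 2` positions is `i + 2` times
the sum over the tuples `[v,u]`; this factor is absorbed by the normalisations `(i+2)!` and
`(i+1)!` of the two inner products. For such a tuple, erasing `v` is a bijection from the
`n`-simplices of `X` containing `[v,u]` onto the `(n-1)`-simplices of `Lk(v)` containing `u`,
so `w([v,u]) = w_v(u)`, and unwinding `d` and `δ` gives `(Δρ_v f)([v,u]) = (Δ_v τ_v f)(u)`.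
-/

open Equiv

lemma swap_comp_succAbove_left {m : ℕ} {a b : Fin (m + 1)} (hab : (a : ℕ) + 1 = b) :
    swap a b ∘ a.succAbove = b.succAbove := by
  funext k
  simp only [Function.comp_apply, swap_apply_def, Fin.succAbove, Fin.ext_iff, Fin.lt_def]
  split_ifs <;> simp_all <;> omega

lemma swap_comp_succAbove_right {m : ℕ} {a b : Fin (m + 1)} (hab : (a : ℕ) + 1 = b) :
    swap a b ∘ b.succAbove = a.succAbove := by
  funext k
  simp only [Function.comp_apply, swap_apply_def, Fin.succAbove, Fin.ext_iff, Fin.lt_def]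
  split_ifs <;> simp_all <;> omega

lemma exists_swap_comp_succAbove {m : ℕ} {j a b : Fin (m + 1)} (hab : (a : ℕ) + 1 = b)
    (ha : j ≠ a) (hb : j ≠ b) :
    ∃ a' b' : Fin m, (a' : ℕ) + 1 = b' ∧ swap a b ∘ j.succAbove = j.succAbove ∘ swap a' b' := by
  obtain ⟨a', rfl⟩ := Fin.exists_succAbove_eq ha.symm
  obtain ⟨b', rfl⟩ := Fin.exists_succAbove_eq hb.symm
  refine ⟨a', b', ?_, funext fun k => (Fin.succAbove_right_injective (p := j)).swap_apply a' b' k⟩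
  simp only [Fin.succAbove, Fin.lt_def] at hab ha hb
  split_ifs at hab ha hb <;> simp_all [Fin.ext_iff] <;> omega

lemma cons_comp_swap {m : ℕ} (x : V) (s : Fin m → V) (a b : Fin m) :
    Fin.cons x (s ∘ swap a b) = (Fin.cons x s : Fin (m + 1) → V) ∘ swap a.succ b.succ := by
  funext k
  refine Fin.cases ?_ (fun k => ?_) k
  · simp [swap_apply_of_ne_of_ne (Fin.succ_ne_zero a).symm (Fin.succ_ne_zero b).symm]
  · simp [(Fin.succ_injective m).swap_apply a b k]

lemma cons_cons_eq_comp_swap {m : ℕ} (x y : V) (w : Fin m → V) :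
    Fin.cons x (Fin.cons y w) = (Fin.cons y (Fin.cons x w) : Fin (m + 2) → V) ∘ swap 0 1 := by
  funext k
  refine Fin.cases ?_ (fun k => Fin.cases ?_ (fun k => ?_) k) k
  · simp
  · simp
  · have h1 : (k.succ.succ : Fin (m + 2)) ≠ 1 := (Fin.succ_injective _).ne (Fin.succ_ne_zero k)
    simp [swap_apply_of_ne_of_ne (Fin.succ_ne_zero _) h1]

def AlternatesAdjacent {m : ℕ} (f : (Fin m → V) → ℝ) : Prop :=
  ∀ (t : Fin m → V) (a b : Fin m), (a : ℕ) + 1 = b → f (t ∘ swap a b) = -f t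

lemma alternatesAdjacent_of_comp_perm {m : ℕ} {f : (Fin m → V) → ℝ}
    (hf : ∀ (σ : Perm (Fin m)) (t : Fin m → V), f (t ∘ σ) = (Perm.sign σ : ℤ) * f t) :
    AlternatesAdjacent f := by
  intro t a b hab
  rw [hf, Perm.sign_swap (Fin.ne_of_val_ne (by omega))]
  simp

lemma AlternatesAdjacent.apply_comp_perm {m : ℕ} {f : (Fin m → V) → ℝ}
    (hf : AlternatesAdjacent f) (σ : Perm (Fin m)) (t : Fin m → V) :
    f (t ∘ σ) = (Perm.sign σ : ℤ) * f t := by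
  cases m with
  | zero => simp [Subsingleton.elim σ 1]
  | succ m =>
    have hσ : σ ∈ Submonoid.closure (Set.range fun i : Fin m ↦ swap i.castSucc i.succ) := by
      rw [Perm.mclosure_swap_castSucc_succ]; trivial
    refine Submonoid.closure_induction ?_ ?_ ?_ hσ t
      (motive := fun (σ : Perm (Fin (m + 1))) _ => ∀ t, f (t ∘ σ) = (Perm.sign σ : ℤ) * f t)
    · rintro _ ⟨i, rfl⟩ t
      rw [hf t _ _ (by simp), Perm.sign_swap (Fin.castSucc_lt_succ).ne]
      simp
    · simp
    · intro σ τ _ _ hσ hτ t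
      rw [Perm.coe_mul, ← Function.comp_assoc, hτ, hσ, Perm.sign_mul]
      push_cast
      ring

section

variable [DecidableEq V]

lemma image_comp_perm {m : ℕ} (q : Fin m → V) (σ : Perm (Fin m)) :
    Finset.image (q ∘ σ) Finset.univ = Finset.image q Finset.univ := by
  rw [← Finset.image_image, Finset.image_univ_equiv]

lemma image_cons {m : ℕ} (x : V) (q : Fin m → V) :
    Finset.image (Fin.cons x q) Finset.univ = insert x (Finset.image q Finset.univ) := by
  simp [← Finset.coe_inj, Fin.range_cons]

lemma wt_insert_eq_wt_linkK {K : Finset (Finset V)} (hK : IsComplex K) {n : ℕ} (hn : 1 ≤ n)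
    {v : V} {T : Finset V} (hvT : v ∉ T) :
    wt K n (insert v T) = wt (linkK K v) (n - 1) T := by
  obtain ⟨n, rfl⟩ : ∃ k, n = k + 1 := ⟨n - 1, by omega⟩
  refine Finset.card_nbij' (fun t => t.erase v) (insert v) ?_ ?_ ?_ ?_
  · intro t ht
    simp only [Finset.coe_filter, Set.mem_ofPred_eq, linkK, Finset.mem_filter] at ht ⊢
    obtain ⟨htK, hsub, hcard⟩ := ht
    have hvt : v ∈ t := hsub (Finset.mem_insert_self v T)
    have hcard' : (t.erase v).card = n + 1 := by rw [Finset.card_erase_of_mem hvt, hcard]; rfl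
    refine ⟨⟨hK.2 t htK _ (Finset.erase_subset v t) ?_, Finset.notMem_erase v t, ?_⟩, ?_, ?_⟩
    · rw [← Finset.card_pos, hcard']; omega
    · rwa [Finset.insert_erase hvt]
    · exact Finset.subset_erase.2 ⟨(Finset.subset_insert v T).trans hsub, hvT⟩
    · simpa using hcard'
  · intro t ht
    simp only [Finset.coe_filter, Set.mem_ofPred_eq, linkK, Finset.mem_filter] at ht ⊢
    obtain ⟨⟨-, hvt, htK⟩, hsub, hcard⟩ := ht
    refine ⟨htK, Finset.insert_subset_insert v hsub, ?_⟩
    rw [Finset.card_insert_of_notMem hvt, hcard]; rfl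
  · intro t ht
    simp only [Finset.coe_filter, Set.mem_ofPred_eq] at ht
    exact Finset.insert_erase (ht.2.1 (Finset.mem_insert_self v T))
  · intro t ht
    simp only [Finset.coe_filter, Set.mem_ofPred_eq, linkK, Finset.mem_filter] at ht
    exact Finset.erase_insert ht.1.2.1

lemma rho_apply_of_eq {m : ℕ} {v : V} (f : (Fin m → V) → ℝ) {s : Fin m → V} (j : Fin m)
    (hj : s j = v) : rho v f s = f s :=
  if_pos ⟨j, hj⟩

lemma rho_cons_self {m : ℕ} (v : V) (f : (Fin (m + 1) → V) → ℝ) (u : Fin m → V) :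
    rho v f (Fin.cons v u) = f (Fin.cons v u) :=
  rho_apply_of_eq f 0 rfl

variable [Fintype V]

lemma sum_eq_mul_sum_cons {m : ℕ} (v : V)
    (p : (Fin (m + 1) → V) → ℝ) (hp : ∀ (σ : Perm (Fin (m + 1))) t, p (t ∘ σ) = p t)
    (hsupp : ∀ t, p t ≠ 0 → ∃! j, t j = v) :
    ∑ t, p t = (m + 1) * ∑ u, p (Fin.cons v u) := by
  have hsplit (t) : p t = ∑ j, if t j = v then p t else 0 := by
    by_cases ht : p t = 0
    · simp [ht]
    obtain ⟨j, hj, huniq⟩ := hsupp t ht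
    rw [Finset.sum_eq_single j (fun k _ hk => if_neg fun h => hk (huniq k h)) (by simp),
      if_pos hj]
  have hmove (j : Fin (m + 1)) :
      (∑ t : Fin (m + 1) → V, if t j = v then p t else 0)
        = ∑ t : Fin (m + 1) → V, if t 0 = v then p t else 0 :=
    Fintype.sum_equiv ((swap 0 j).arrowCongr (Equiv.refl V)) _ _ fun t => by
      change _ = if t (swap 0 j 0) = v then p (t ∘ swap 0 j) else 0
      rw [swap_apply_left, hp]
  have hfirst : (∑ t : Fin (m + 1) → V, if t 0 = v then p t else 0)
      = ∑ u, p (Fin.cons v u) := by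
    rw [← (Fin.consEquiv fun _ => V).sum_comp, Fintype.sum_prod_type]
    simp [Fin.consEquiv]
  calc ∑ t, p t = ∑ j, ∑ t : Fin (m + 1) → V, if t j = v then p t else 0 := by
        rw [Finset.sum_comm]; exact Finset.sum_congr rfl fun t _ => hsplit t
    _ = (m + 1) * ∑ u, p (Fin.cons v u) := by simp [hmove, hfirst]

lemma allowed_comp_perm_iff (K : Finset (Finset V)) {m : ℕ} (q : Fin m → V)
    (σ : Perm (Fin m)) : Allowed K (q ∘ σ) ↔ Allowed K q := by
  rw [Allowed, Allowed, image_comp_perm, σ.injective_comp]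

lemma notMem_image_of_allowed_linkK {K : Finset (Finset V)} {v : V} {m : ℕ} {q : Fin m → V}
    (h : Allowed (linkK K v) q) : v ∉ Finset.image q Finset.univ :=
  (Finset.mem_filter.1 h.2).2.1

lemma allowed_cons_iff_allowed_linkK {K : Finset (Finset V)} (hK : IsComplex K) {m : ℕ}
    (v : V) (q : Fin (m + 1) → V) :
    Allowed K (Fin.cons v q) ↔ Allowed (linkK K v) q := by
  simp only [Allowed, Fin.cons_injective_iff, image_cons, linkK, Finset.mem_filter]
  constructor
  · rintro ⟨⟨hv, hinj⟩, hmem⟩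
    exact ⟨hinj, hK.2 _ hmem _ (Finset.subset_insert _ _) ⟨q 0, by simp⟩, by simpa using hv,
      hmem⟩
  · rintro ⟨hinj, -, hv, hmem⟩
    exact ⟨⟨by simpa using hv, hinj⟩, hmem⟩

lemma allowed_cons_cons_iff {K : Finset (Finset V)} (hK : IsComplex K) {m : ℕ}
    (v x : V) (u : Fin m → V) :
    Allowed K (Fin.cons x (Fin.cons v u)) ↔ Allowed (linkK K v) (Fin.cons x u) := by
  rw [cons_cons_eq_comp_swap, allowed_comp_perm_iff, allowed_cons_iff_allowed_linkK hK]

lemma alternatesAdjacent_cobound (K : Finset (Finset V)) {m : ℕ} {g : (Fin m → V) → ℝ}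
    (hg : AlternatesAdjacent g) : AlternatesAdjacent (cobound K g) := by
  intro t a b hab
  unfold cobound
  rw [allowed_comp_perm_iff]
  split_ifs
  · rw [← Finset.sum_neg_distrib, ← Equiv.sum_comp (swap a b)]
    refine Finset.sum_congr rfl fun j _ => ?_
    rw [Function.comp_assoc]
    by_cases hja : j = a
    · subst hja
      rw [swap_apply_left, swap_comp_succAbove_right hab, ← hab, pow_succ]
      ring
    by_cases hjb : j = b
    · subst hjb
      rw [swap_apply_right, swap_comp_succAbove_left hab, ← hab, pow_succ]
      ring
    obtain ⟨a', b', hab', hcomp⟩ := exists_swap_comp_succAbove hab hja hjb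
    rw [swap_apply_of_ne_of_ne hja hjb, hcomp, ← Function.comp_assoc, hg _ a' b' hab']
    ring
  · simp

lemma alternatesAdjacent_codiff (K : Finset (Finset V)) (n : ℕ) {m : ℕ}
    {F : (Fin (m + 1) → V) → ℝ} (hF : AlternatesAdjacent F) :
    AlternatesAdjacent (codiff K n F) := by
  intro s a b hab
  unfold codiff
  rw [← Finset.sum_neg_distrib]
  refine Finset.sum_congr rfl fun x _ => ?_
  rw [cons_comp_swap, allowed_comp_perm_iff, image_comp_perm, image_comp_perm]
  split_ifs
  · rw [hF _ _ _ (by simpa using hab)]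
    ring
  · simp

lemma IsCochain.rho {K : Finset (Finset V)} {m : ℕ} {f : (Fin m → V) → ℝ}
    (hf : IsCochain K m f) (v : V) : IsCochain K m (rho v f) := by
  refine ⟨fun σ t => ?_, fun t ht => ?_⟩
  · have hiff : (∃ j, (t ∘ σ) j = v) ↔ ∃ j, t j = v :=
      ⟨fun ⟨j, hj⟩ => ⟨σ j, hj⟩, fun ⟨j, hj⟩ => ⟨σ.symm j, by simpa using hj⟩⟩
    simp only [_root_.rho, hiff]
    split_ifs
    · exact hf.1 σ t
    · simp
  · simp [_root_.rho, hf.2 t ht]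

lemma IsCochain.tau_apply {K : Finset (Finset V)} (hK : IsComplex K) {m : ℕ}
    {f : (Fin (m + 2) → V) → ℝ} (hf : IsCochain K (m + 2) f) (v : V) (u : Fin (m + 1) → V) :
    tau K v f u = f (Fin.cons v u) := by
  unfold tau
  split_ifs with hA
  · rfl
  · exact (hf.2 _ fun h => hA ((allowed_cons_iff_allowed_linkK hK v u).1 h)).symm

lemma cobound_rho_apply_cons_cons {K : Finset (Finset V)} (hK : IsComplex K) {m : ℕ}
    {f : (Fin (m + 2) → V) → ℝ} (hf : IsCochain K (m + 2) f) (v x : V)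
    (u : Fin (m + 1) → V) :
    cobound K (rho v f) (Fin.cons x (Fin.cons v u))
      = cobound (linkK K v) (tau K v f) (Fin.cons x u) := by
  unfold cobound
  rw [if_congr (allowed_cons_cons_iff hK v x u) rfl rfl]
  split_ifs with hA
  · have hvxu := notMem_image_of_allowed_linkK hA
    simp only [image_cons, Finset.mem_insert, Finset.mem_image, Finset.mem_univ, true_and,
      not_or, not_exists] at hvxu
    have hxu : rho v f (Fin.cons x u) = 0 := if_neg fun ⟨j, hj⟩ =>
      Fin.cases (fun h => hvxu.1 h.symm) (fun l h => hvxu.2 l h) j hj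
    have hxvw (w : Fin m → V) :
        rho v f (Fin.cons x (Fin.cons v w)) = -tau K v f (Fin.cons x w) := by
      rw [rho_apply_of_eq (v := v) (s := Fin.cons x (Fin.cons v w)) f 1 rfl, hf.tau_apply hK,
        cons_cons_eq_comp_swap, hf.1, Perm.sign_swap Fin.zero_ne_one]
      simp
    have hremove (l : Fin (m + 1)) :
        (l.succ.removeNth (Fin.cons v u : Fin (m + 2) → V) : Fin (m + 1) → V)
          = Fin.cons v (l.removeNth u) :=
      Fin.cons_comp_succ_succAbove v u l
    conv_lhs => rw [Fin.sum_univ_succ, Fin.sum_univ_succ]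
    conv_rhs => rw [Fin.sum_univ_succ]
    simp only [Fin.succAbove_zero, Fin.cons_comp_succ, Fin.cons_comp_succ_succAbove,
      Fin.removeNth_zero, Fin.tail_cons, hremove, hxu, hxvw, rho_cons_self,
      hf.tau_apply hK]
    simp [pow_succ]
  · rfl

lemma lap_rho_apply_cons {K : Finset (Finset V)} (hK : IsComplex K) {n m : ℕ} (hn : 1 ≤ n)
    {f : (Fin (m + 2) → V) → ℝ} (hf : IsCochain K (m + 2) f) (v : V) (u : Fin (m + 1) → V) :
    lap K n (rho v f) (Fin.cons v u) = lap (linkK K v) (n - 1) (tau K v f) u := by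
  unfold lap codiff
  refine Finset.sum_congr rfl fun x _ => ?_
  rw [if_congr (allowed_cons_cons_iff hK v x u) rfl rfl]
  split_ifs with hA
  · have hvxu := notMem_image_of_allowed_linkK hA
    have hvu : v ∉ Finset.image u Finset.univ := fun h =>
      hvxu (by rw [image_cons]; exact Finset.mem_insert_of_mem h)
    rw [cobound_rho_apply_cons_cons hK hf, image_cons x (Fin.cons v u), image_cons v u,
      Finset.insert_comm, ← image_cons x u, wt_insert_eq_wt_linkK hK hn hvxu,
      wt_insert_eq_wt_linkK hK hn hvu]
  · rfl

lemma sum_wt_mul_rho (K : Finset (Finset V)) (n : ℕ) {m : ℕ} {f g : (Fin (m + 1) → V) → ℝ}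
    (hf : IsCochain K (m + 1) f)
    (hg : ∀ (σ : Perm (Fin (m + 1))) t, g (t ∘ σ) = (Perm.sign σ : ℤ) * g t) (v : V) :
    ∑ t, (wt K n (Finset.image t Finset.univ) : ℝ) * g t * rho v f t
      = (m + 1) * ∑ u, (wt K n (Finset.image (Fin.cons v u) Finset.univ) : ℝ) *
          g (Fin.cons v u) * f (Fin.cons v u) := by
  rw [sum_eq_mul_sum_cons v]
  · simp only [rho_cons_self]
  · intro σ t
    have hsign : ((Perm.sign σ : ℤ) : ℝ) * (Perm.sign σ : ℤ) = 1 := by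
      rw [← Int.cast_mul, ← Units.val_mul, Int.units_mul_self, Units.val_one, Int.cast_one]
    rw [image_comp_perm, hg, (hf.rho v).1]
    linear_combination (wt K n (Finset.image t Finset.univ) * g t * rho v f t : ℝ) * hsign
  · intro t ht
    obtain ⟨j, hj⟩ : ∃ j, t j = v := by
      by_contra h
      exact ht (by simp [rho, h])
    have hinj : Function.Injective t := by
      by_contra h
      exact ht (by rw [rho_apply_of_eq f j hj, hf.2 t fun hA => h hA.1]; ring)
    exact ⟨j, hj, fun k hk => hinj (hk.trans hj.symm)⟩

end

theorem rho_tau_laplacian_general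
    [Fintype V] [DecidableEq V] (K : Finset (Finset V)) (n i : ℕ)
    (hcplx : IsComplex K) (hi1 : 1 ≤ i) (hin : i + 1 ≤ n)
    (v : V)
    (f : (Fin (i + 1) → V) → ℝ) (hf : IsCochain K (i + 1) f) :
    innerC K n (i + 1) (lap K n (rho v f)) (rho v f)
      = innerC (linkK K v) (n - 1) i (lap (linkK K v) (n - 1) (tau K v f)) (tau K v f) := by
  obtain ⟨i, rfl⟩ : ∃ k, i = k + 1 := ⟨i - 1, by omega⟩
  have hlap := (alternatesAdjacent_codiff K n (alternatesAdjacent_cobound K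
    (alternatesAdjacent_of_comp_perm (hf.rho v).1))).apply_comp_perm
  have hterm (u : Fin (i + 1) → V) :
      (wt K n (Finset.image (Fin.cons v u) Finset.univ) : ℝ) *
          lap K n (rho v f) (Fin.cons v u) * f (Fin.cons v u)
        = wt (linkK K v) (n - 1) (Finset.image u Finset.univ) *
          lap (linkK K v) (n - 1) (tau K v f) u * tau K v f u := by
    rw [← hf.tau_apply hcplx, lap_rho_apply_cons hcplx (by omega) hf]
    by_cases hA : Allowed (linkK K v) u
    · rw [image_cons, wt_insert_eq_wt_linkK hcplx (by omega) (notMem_image_of_allowed_linkK hA)]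
    · simp [tau, hA]
  unfold innerC
  rw [sum_wt_mul_rho K n hf (g := lap K n (rho v f)) hlap v,
    Finset.sum_congr rfl fun u _ => hterm u, Nat.factorial_succ]
  push_cast
  field_simp

/-- for `1 ≤ i ≤ n-1`, a vertex `v` of `X`, and `f ∈ C^i(X)`,
`(Δρ_v f, ρ_v f) = (Δ_v τ_v f, τ_v f)_v`, where `Δ_v` is the Laplace operator of the
link `Lk(v)` (an `(n-1)`-dimensional complex) acting on `C^{i-1}(Lk(v))`. -/
theorem rho_tau_laplacian
    [Fintype V] [DecidableEq V] (K : Finset (Finset V)) (n i : ℕ)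
    (hcplx : IsComplex K) (hpure : IsPureDim K n) (hi1 : 1 ≤ i) (hin : i + 1 ≤ n)
    (v : V) (hv : {v} ∈ K)
    (f : (Fin (i + 1) → V) → ℝ) (hf : IsCochain K (i + 1) f) :
    innerC K n (i + 1) (lap K n (rho v f)) (rho v f)
      = innerC (linkK K v) (n - 1) i (lap (linkK K v) (n - 1) (tau K v f)) (tau K v f) :=
  rho_tau_laplacian_general K n i hcplx hi1 hin v f hf
end
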